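/- Let f(X) = a_0 + a_1 X + ... + a_n X^n ∈ Z[X] with a_0 a_n ≠ 0. Suppose there exists an index j ∈ {2, ..., n-2} and two distinct primes p and q such that: (i) p divides a_i for all i > 1, p does not divide a_1, and p^2 does not divide a_n; (ii) q divides a_i for all i ≠ j, q does not divide a_j, q^2 does not divide a_0, and q^2 does not divide a_n. Then f is irreducible over Q. -/

import Mathlib

/-!
Reduce a factorisation `f = g * h` over `ℤ`. Modulo `p`, `f ≡ a₁ X` has degree one, and since
`p² ∤ aₙ` one of `g`, `h` keeps its degree there, so it has degree at most one. Modulo `q`,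
`f ≡ a_j X^j`, so the reductions of `g` and `h` are monomials; `q² ∤ a₀` makes one of them a
constant and `q² ∤ aₙ` makes one of them keep its degree, so every factor has degree
`0`, `j`, `n - j` or `n`. As `2 ≤ j ≤ n - 2`, a factor of degree at most one is a constant, and
Gauss's lemma transfers irreducibility to `ℚ`.
-/

open Polynomial Finset

theorem ZMod.intCast_ne_zero_or_of_not_sq_dvd_mul {q : ℕ} {a b : ℤ}
    (h : ¬ (q : ℤ) ^ 2 ∣ a * b) : (a : ZMod q) ≠ 0 ∨ (b : ZMod q) ≠ 0 := by
  by_contra! ⟨ha, hb⟩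
  rw [ZMod.intCast_zmod_eq_zero_iff_dvd] at ha hb
  exact h (sq (q : ℤ) ▸ mul_dvd_mul ha hb)

namespace Polynomial

theorem coeff_sum_range_C_mul_X_pow {R : Type*} [Semiring R] (a : ℕ → R) (n i : ℕ) :
    (∑ k ∈ range (n + 1), C (a k) * X ^ k).coeff i = if i ≤ n then a i else 0 := by
  simp

theorem natDegree_sum_range_C_mul_X_pow {R : Type*} [Semiring R] {a : ℕ → R} {n : ℕ}
    (han : a n ≠ 0) : (∑ k ∈ range (n + 1), C (a k) * X ^ k).natDegree = n := by
  refine natDegree_eq_of_le_of_coeff_ne_zero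
    (natDegree_le_iff_coeff_eq_zero.mpr fun i hi => ?_) (by simpa)
  simp [not_le.mpr (by exact_mod_cast hi : n < i)]

section Reduction

variable {R S : Type*} [CommRing R] [CommRing S] [IsDomain S] (φ : R →+* S) {g h : R[X]}

theorem natDegree_le_natDegree_map_mul (hgh : (g * h).map φ ≠ 0)
    (hlead : φ g.leadingCoeff ≠ 0 ∨ φ h.leadingCoeff ≠ 0) :
    g.natDegree ≤ ((g * h).map φ).natDegree ∨ h.natDegree ≤ ((g * h).map φ).natDegree := by
  rw [Polynomial.map_mul] at hgh ⊢
  rw [natDegree_mul (left_ne_zero_of_mul hgh) (right_ne_zero_of_mul hgh)]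
  rcases hlead with hg | hh
  · exact .inl (natDegree_map_of_leadingCoeff_ne_zero φ hg ▸ le_self_add)
  · exact .inr (natDegree_map_of_leadingCoeff_ne_zero φ hh ▸ le_add_self)

theorem natDegree_eq_zero_or_of_map_mul_eq_C_mul_X_pow {c : S} {j : ℕ} (hc : c ≠ 0)
    (hgh : (g * h).map φ = C c * X ^ j)
    (hcoeff : φ (g.coeff 0) ≠ 0 ∨ φ (h.coeff 0) ≠ 0)
    (hlead : φ g.leadingCoeff ≠ 0 ∨ φ h.leadingCoeff ≠ 0) :
    g.natDegree = 0 ∨ g.natDegree = j ∨ h.natDegree = 0 ∨ h.natDegree = j := by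
  rw [Polynomial.map_mul] at hgh
  have hne : g.map φ * h.map φ ≠ 0 :=
    hgh ▸ mul_ne_zero (C_ne_zero.mpr hc) (pow_ne_zero _ X_ne_zero)
  have hg := left_ne_zero_of_mul hne
  have hh := right_ne_zero_of_mul hne
  have hdeg : (g.map φ).natDegree + (h.map φ).natDegree = j := by
    rw [← natDegree_mul hg hh, hgh, natDegree_C_mul_X_pow j c hc]
  -- trailing degrees add up to `j` as well, so both reductions are monomials
  have htrail : (g.map φ).natTrailingDegree + (h.map φ).natTrailingDegree = j := by
    rw [← natTrailingDegree_mul hg hh, hgh, C_mul_X_pow_eq_monomial,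
      natTrailingDegree_monomial hc]
  have hg_le := (g.map φ).natTrailingDegree_le_natDegree
  have hh_le := (h.map φ).natTrailingDegree_le_natDegree
  have htrail0 : (g.map φ).natTrailingDegree = 0 ∨ (h.map φ).natTrailingDegree = 0 := by
    simpa only [natTrailingDegree_eq_zero, coeff_map, hg, hh, false_or] using hcoeff
  have hlead' : (g.map φ).natDegree = g.natDegree ∨ (h.map φ).natDegree = h.natDegree :=
    hlead.imp (natDegree_map_of_leadingCoeff_ne_zero φ) (natDegree_map_of_leadingCoeff_ne_zero φ)
  omega

end Reduction

theorem irreducible_map_of_forall_natDegree_eq_zero {R K : Type*} [CommRing R] [IsDomain R]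
    [NormalizedGCDMonoid R] [Field K] [Algebra R K] [IsFractionRing R K] {f : R[X]}
    (hf : 0 < f.natDegree) (hfac : ∀ g h, f = g * h → g.natDegree = 0 ∨ h.natDegree = 0) :
    Irreducible (f.map (algebraMap R K)) := by
  have hprim := f.isPrimitive_primPart
  have hc : f.content ≠ 0 := mt content_eq_zero_iff.mp (ne_zero_of_natDegree_gt hf)
  have isUnit_of_dvd : ∀ g, g ∣ f.primPart → g.natDegree = 0 → IsUnit g := by
    intro g hg hg0
    rw [eq_C_of_natDegree_eq_zero hg0] at hg ⊢
    exact isUnit_C.mpr (isPrimitive_iff_isUnit_of_C_dvd.mp hprim _ hg)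
  have hirr : Irreducible f.primPart := by
    refine ⟨fun hu => ?_, fun g h hgh => ?_⟩
    · have := natDegree_eq_zero_of_isUnit hu
      rw [natDegree_primPart] at this
      omega
    · have := hfac (C f.content * g) h <| by
        rw [mul_assoc, ← hgh, ← f.eq_C_content_mul_primPart]
      rw [natDegree_C_mul hc] at this
      exact this.imp (isUnit_of_dvd g (Dvd.intro _ hgh.symm))
        (isUnit_of_dvd h (Dvd.intro_left _ hgh.symm))
  rw [eq_C_content_mul_primPart f, Polynomial.map_mul, map_C, irreducible_isUnit_mul
    (isUnit_C.mpr ((map_ne_zero_iff _ (IsFractionRing.injective R K)).mpr hc).isUnit)]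
  exact (hprim.irreducible_iff_irreducible_map_fraction_map).mp hirr

theorem natDegree_le_one_or_of_eq_mul {p : ℕ} [Fact p.Prime] {f g h : ℤ[X]} (hfgh : f = g * h)
    (hp1 : ∀ i, 1 < i → (p : ℤ) ∣ f.coeff i) (hp2 : ¬ (p : ℤ) ∣ f.coeff 1)
    (hp3 : ¬ (p : ℤ) ^ 2 ∣ f.leadingCoeff) :
    g.natDegree ≤ 1 ∨ h.natDegree ≤ 1 := by
  have hle : (f.map (Int.castRingHom (ZMod p))).natDegree ≤ 1 :=
    natDegree_le_iff_coeff_eq_zero.mpr fun i hi => by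
      simpa [ZMod.intCast_zmod_eq_zero_iff_dvd] using hp1 i (by exact_mod_cast hi)
  have hne : f.map (Int.castRingHom (ZMod p)) ≠ 0 := fun h0 => hp2 <| by
    simpa [ZMod.intCast_zmod_eq_zero_iff_dvd] using congr_arg (coeff · 1) h0
  subst hfgh
  rw [leadingCoeff_mul] at hp3
  exact (natDegree_le_natDegree_map_mul _ hne
    (ZMod.intCast_ne_zero_or_of_not_sq_dvd_mul hp3)).imp (·.trans hle) (·.trans hle)

theorem natDegree_eq_zero_or_of_eq_mul {q j : ℕ} [Fact q.Prime] {f g h : ℤ[X]}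
    (hfgh : f = g * h)
    (hq1 : ∀ i, i ≠ j → (q : ℤ) ∣ f.coeff i) (hq2 : ¬ (q : ℤ) ∣ f.coeff j)
    (hq3 : ¬ (q : ℤ) ^ 2 ∣ f.coeff 0) (hq4 : ¬ (q : ℤ) ^ 2 ∣ f.leadingCoeff) :
    g.natDegree = 0 ∨ g.natDegree = j ∨ h.natDegree = 0 ∨ h.natDegree = j := by
  have hmap : f.map (Int.castRingHom (ZMod q)) = C (f.coeff j : ZMod q) * X ^ j := by
    ext i
    rw [coeff_map, coeff_C_mul_X_pow]
    split_ifs with hi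
    · simp [hi]
    · simpa [ZMod.intCast_zmod_eq_zero_iff_dvd] using hq1 i hi
  subst hfgh
  rw [mul_coeff_zero] at hq3
  rw [leadingCoeff_mul] at hq4
  exact natDegree_eq_zero_or_of_map_mul_eq_C_mul_X_pow _
    (by rwa [ne_eq, ZMod.intCast_zmod_eq_zero_iff_dvd]) hmap
    (ZMod.intCast_ne_zero_or_of_not_sq_dvd_mul hq3)
    (ZMod.intCast_ne_zero_or_of_not_sq_dvd_mul hq4)

end Polynomial

theorem corollary_1_30_general (n : ℕ) (a : ℕ → ℤ)
    (j : ℕ) (hj1 : 2 ≤ j) (hj2 : j ≤ n - 2)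
    (p q : ℕ) (hp : p.Prime) (hq : q.Prime)
    (hp1 : ∀ i, 1 < i → i ≤ n → (p : ℤ) ∣ a i)
    (hp2 : ¬ (p : ℤ) ∣ a 1)
    (hp3 : ¬ (p : ℤ)^2 ∣ a n)
    (hq1 : ∀ i ≤ n, i ≠ j → (q : ℤ) ∣ a i)
    (hq2 : ¬ (q : ℤ) ∣ a j)
    (hq3 : ¬ (q : ℤ)^2 ∣ a 0) (hq4 : ¬ (q : ℤ)^2 ∣ a n) :
    Irreducible ((∑ i ∈ range (n+1), C (a i) * X ^ i).map (Int.castRingHom ℚ)) := by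
  have := Fact.mk hp
  have := Fact.mk hq
  set f := ∑ i ∈ range (n+1), C (a i) * X ^ i
  have hdeg : f.natDegree = n := natDegree_sum_range_C_mul_X_pow fun h => hp3 (by simp [h])
  have hcoeff_le : ∀ {i}, i ≤ n → f.coeff i = a i := fun hi => by
    rw [coeff_sum_range_C_mul_X_pow, if_pos hi]
  have dvd_coeff : ∀ {r : ℤ} {i}, (i ≤ n → r ∣ a i) → r ∣ f.coeff i := fun hr => by
    rw [coeff_sum_range_C_mul_X_pow]; split_ifs with hi; exacts [hr hi, dvd_zero _]
  have hlead : f.leadingCoeff = a n := by rw [leadingCoeff, hdeg, hcoeff_le le_rfl]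
  rw [← algebraMap_int_eq]
  refine irreducible_map_of_forall_natDegree_eq_zero (by omega) fun g h hfgh => ?_
  have hsum : g.natDegree + h.natDegree = n := by
    have hgh : g * h ≠ 0 := hfgh ▸ ne_zero_of_natDegree_gt (n := 0) (by omega)
    rw [← hdeg, hfgh, natDegree_mul (left_ne_zero_of_mul hgh) (right_ne_zero_of_mul hgh)]
  have hmod_p := natDegree_le_one_or_of_eq_mul (p := p) hfgh
    (fun i hi => dvd_coeff (hp1 i hi)) (by rwa [hcoeff_le (by omega)]) (by rwa [hlead])
  have hmod_q := natDegree_eq_zero_or_of_eq_mul (q := q) hfgh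
    (fun i hi => dvd_coeff (hq1 i · hi)) (by rwa [hcoeff_le (by omega)])
    (by rwa [hcoeff_le (by omega)]) (by rwa [hlead])
  omega

theorem corollary_1_30 (n : ℕ) (hn : 4 ≤ n) (a : ℕ → ℤ)
    (ha0 : a 0 ≠ 0) (han : a n ≠ 0)
    (j : ℕ) (hj1 : 2 ≤ j) (hj2 : j ≤ n - 2)
    (p q : ℕ) (hp : p.Prime) (hq : q.Prime) (hpq : p ≠ q)
    (hp1 : ∀ i, 1 < i → i ≤ n → (p : ℤ) ∣ a i)
    (hp2 : ¬ (p : ℤ) ∣ a 1)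
    (hp3 : ¬ (p : ℤ)^2 ∣ a n)
    (hq1 : ∀ i ≤ n, i ≠ j → (q : ℤ) ∣ a i)
    (hq2 : ¬ (q : ℤ) ∣ a j)
    (hq3 : ¬ (q : ℤ)^2 ∣ a 0) (hq4 : ¬ (q : ℤ)^2 ∣ a n) :
    Irreducible ((∑ i ∈ range (n+1), C (a i) * X ^ i).map (Int.castRingHom ℚ)) :=
  corollary_1_30_general n a j hj1 hj2 p q hp hq hp1 hp2 hp3 hq1 hq2 hq3 hq4
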